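/- In the 4-item 4-agent non-existence example, no competitive equilibrium gives each of the four agents exactly one item: in any such allocation Alice gets w, Bob gets z, Carl gets x, Dana gets y, but Alice can afford the pair xy (since a > c + d) and prefers it to w, contradicting the CE conditions. -/
import Mathlib


open Finset

/-- `r A B` means bundle `A` is strictly preferred to bundle `B`.
The preference is transitive, asymmetric, total (strict) and monotone. -/
def StrictMonoPref {m : ℕ} (r : Finset (Fin m) → Finset (Fin m) → Prop) : Prop :=
  (∀ A B C, r A B → r B C → r A C) ∧
  (∀ A B, r A B → ¬ r B A) ∧
  (∀ A B : Finset (Fin m), A ≠ B → r A B ∨ r B A) ∧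
  (∀ A B : Finset (Fin m), A ⊂ B → r B A)

/-- Competitive equilibrium: positive prices, the bundles partition all items,
every agent with a non-empty bundle pays exactly their income, and every agent
either strictly prefers their own bundle to, or cannot afford, any other bundle. -/
def IsCE {m n : ℕ} (t : Fin n → ℝ)
    (pref : Fin n → Finset (Fin m) → Finset (Fin m) → Prop)
    (p : Fin m → ℝ) (X : Fin n → Finset (Fin m)) : Prop :=
  (∀ k, 0 < p k) ∧
  (∀ i j, i ≠ j → Disjoint (X i) (X j)) ∧
  (Finset.univ.biUnion X = Finset.univ) ∧
  (∀ i, X i ≠ ∅ → ∑ k ∈ X i, p k = t i) ∧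
  (∀ i (Y : Finset (Fin m)), Y ≠ X i → pref i (X i) Y ∨ t i < ∑ k ∈ Y, p k)

namespace FourItemsCaseOne

def w : Fin 4 := 0
def x : Fin 4 := 1
def y : Fin 4 := 2
def z : Fin 4 := 3

/-- **Case 1 of the 4-item 4-agent non-existence example.**
Incomes `a > b > c > d > 0` with `a > c + d`; preferences contain
Alice: `xy ≻ w ≻ x ≻ y ≻ z`, Bob: `w ≻ z ≻ x ≻ y`, Carl: `x ≻ y ≻ w ≻ z`.
Then no competitive equilibrium gives each of the four agents exactly one item
(in such an equilibrium Alice would get `w`, Bob `z`, Carl `x` and Dana `y`,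
but Alice can afford `{x, y}`, priced `c + d < a`, which she prefers to `w`). -/
theorem no_CE_with_one_item_each
    (a b c d : ℝ)
    (hab : a > b) (hbc : b > c) (hcd : c > d) (hd : d > 0)
    (hacd : a > c + d)
    (pref : Fin 4 → Finset (Fin 4) → Finset (Fin 4) → Prop)
    (hpref : ∀ i, StrictMonoPref (pref i))
    -- Alice
    (hA1 : pref 0 {x, y} {w}) (hA2 : pref 0 {w} {x})
    (hA3 : pref 0 {x} {y}) (hA4 : pref 0 {y} {z})
    -- Bob
    (hB1 : pref 1 {w} {z}) (hB2 : pref 1 {z} {x}) (hB3 : pref 1 {x} {y})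
    -- Carl
    (hC1 : pref 2 {x} {y}) (hC2 : pref 2 {y} {w}) (hC3 : pref 2 {w} {z}) :
    ¬ ∃ (p : Fin 4 → ℝ) (X : Fin 4 → Finset (Fin 4)),
        IsCE ![a, b, c, d] pref p X ∧ ∀ i, (X i).card = 1 := by
  rintro ⟨p, X, ⟨hp, hdisj, huniv, hpay, hopt⟩, hcard⟩
  obtain ⟨s0, h0⟩ := Finset.card_eq_one.mp (hcard 0)
  obtain ⟨s1, h1⟩ := Finset.card_eq_one.mp (hcard 1)
  obtain ⟨s2, h2⟩ := Finset.card_eq_one.mp (hcard 2)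
  obtain ⟨s3, h3⟩ := Finset.card_eq_one.mp (hcard 3)
  have hp0 : p s0 = a := by simpa [h0] using hpay 0 (by simp [h0])
  have hp1 : p s1 = b := by simpa [h1] using hpay 1 (by simp [h1])
  have hp2 : p s2 = c := by simpa [h2] using hpay 2 (by simp [h2])
  have hp3 : p s3 = d := by simpa [h3] using hpay 3 (by simp [h3])
  have d01 : s0 ≠ s1 := by
    intro h; have := hdisj 0 1 (by decide); rw [h0, h1, h] at this; simp at this
  have d02 : s0 ≠ s2 := by
    intro h; have := hdisj 0 2 (by decide); rw [h0, h2, h] at this; simp at this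
  have d12 : s1 ≠ s2 := by
    intro h; have := hdisj 1 2 (by decide); rw [h1, h2, h] at this; simp at this
  have hsurj : ∀ k : Fin 4, k = s0 ∨ k = s1 ∨ k = s2 ∨ k = s3 := by
    intro k
    have hk : k ∈ Finset.univ.biUnion X := by rw [huniv]; exact Finset.mem_univ k
    obtain ⟨j, -, hj⟩ := Finset.mem_biUnion.mp hk
    have hj4 : j = 0 ∨ j = 1 ∨ j = 2 ∨ j = 3 := by omega
    rcases hj4 with h|h|h|h <;> subst h
    · rw [h0] at hj; simp at hj; tauto
    · rw [h1] at hj; simp at hj; tauto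
    · rw [h2] at hj; simp at hj; tauto
    · rw [h3] at hj; simp at hj; tauto
  obtain ⟨tr0, as0, -, -⟩ := hpref 0
  obtain ⟨tr1, as1, -, -⟩ := hpref 1
  obtain ⟨-, as2, -, -⟩ := hpref 2
  -- Alice gets w
  have hs0 : s0 = w := by
    by_contra hne
    have hpw : p w ≤ a := by
      rcases hsurj w with h|h|h|h <;> rw [h] <;>
        first | linarith [hp0] | linarith [hp1] | linarith [hp2] | linarith [hp3]
    have hchain : ∀ u : Fin 4, u ≠ w → pref 0 {w} {u} := by
      intro u hu
      fin_cases u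
      · exact absurd rfl hu
      · exact hA2
      · exact tr0 _ _ _ hA2 hA3
      · exact tr0 _ _ _ (tr0 _ _ _ hA2 hA3) hA4
    rcases hopt 0 {w} (by rw [h0]; simp; exact fun h => hne h.symm) with hpr | hlt
    · rw [h0] at hpr; exact as0 _ _ (hchain s0 hne) hpr
    · simp [Finset.sum_singleton] at hlt; linarith
  -- Bob gets z
  have hs1 : s1 = z := by
    by_contra hne
    have hpz : p z ≤ c := by
      rcases hsurj z with h|h|h|h
      · rw [hs0] at h; exact absurd h (by decide)
      · exact absurd h.symm hne
      · rw [h]; linarith [hp2]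
      · rw [h]; linarith [hp3]
    have hchain : ∀ u : Fin 4, u ≠ w → u ≠ z → pref 1 {z} {u} := by
      intro u hu hz
      fin_cases u
      · exact absurd rfl hu
      · exact hB2
      · exact tr1 _ _ _ hB2 hB3
      · exact absurd rfl hz
    have hne0 : s1 ≠ w := by rw [← hs0]; exact fun h => d01 h.symm
    rcases hopt 1 {z} (by rw [h1]; simp; exact fun h => hne h.symm) with hpr | hlt
    · rw [h1] at hpr; exact as1 _ _ (hchain s1 hne0 hne) hpr
    · simp [Finset.sum_singleton] at hlt; linarith
  -- Carl gets x
  have hs2 : s2 = x := by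
    by_contra hne
    have hs2y : s2 = y := by
      have hw : s2 ≠ w := by rw [← hs0]; exact fun h => d02 h.symm
      have hz : s2 ≠ z := by rw [← hs1]; exact fun h => d12 h.symm
      have key : ∀ u : Fin 4, u ≠ w → u ≠ z → u ≠ x → u = y := by decide
      exact key s2 hw hz hne
    have hx3 : x = s3 := by
      rcases hsurj x with h|h|h|h
      · rw [hs0] at h; exact absurd h (by decide)
      · rw [hs1] at h; exact absurd h (by decide)
      · exact absurd h.symm hne
      · exact h
    have hpx : p x = d := by rw [hx3]; exact hp3
    rcases hopt 2 {x} (by rw [h2, hs2y]; decide) with hpr | hlt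
    · rw [h2, hs2y] at hpr; exact as2 _ _ hC1 hpr
    · simp [Finset.sum_singleton, hpx] at hlt; linarith
  -- Dana gets y
  have hs3 : s3 = y := by
    rcases hsurj y with h|h|h|h
    · rw [hs0] at h; exact absurd h (by decide)
    · rw [hs1] at h; exact absurd h (by decide)
    · rw [hs2] at h; exact absurd h (by decide)
    · exact h.symm
  -- Alice can afford {x, y} and prefers it to {w}
  have hpx : p x = c := by rw [← hs2]; exact hp2
  have hpy : p y = d := by rw [← hs3]; exact hp3
  rcases hopt 0 {x, y} (by rw [h0, hs0]; decide) with hpr | hlt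
  · rw [h0, hs0] at hpr; exact as0 _ _ hA1 hpr
  · rw [Finset.sum_pair (by decide : x ≠ y), hpx, hpy] at hlt
    simp at hlt; linarith

end FourItemsCaseOne
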